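/- arXiv:1512.00482 — 2 statements merged into one kernel-verified Lean document; each statement's English description precedes it below -/
import Mathlib

section
/- For all languages M₁, M₂ ⊆ Σ*: (M₁ ⧢ M₂^{⧢,*})^{⧢,*} = (M₁ ⧢ (M₁ ∪ M₂)^{⧢,*}) ∪ {ε}. -/
variable {α : Type*}

/-- `IsShuffle u v w` means `w` is an interleaving of `u` and `v`. -/
inductive IsShuffle : List α → List α → List α → Prop
  | nil : IsShuffle [] [] []
  | left {u v w : List α} (a : α) : IsShuffle u v w → IsShuffle (a :: u) v (a :: w)
  | right {u v w : List α} (b : α) : IsShuffle u v w → IsShuffle u (b :: v) (b :: w)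

/-- The shuffle `u ⧢ v` of two words, as a set of words. -/
def wordShuffle (u v : List α) : Set (List α) := {w | IsShuffle u v w}

/-- The shuffle of two languages. -/
def lshuffle (L₁ L₂ : Set (List α)) : Set (List α) :=
  {w | ∃ u ∈ L₁, ∃ v ∈ L₂, IsShuffle u v w}

/-- n-fold shuffle power. -/
def shufflePow (L : Set (List α)) : ℕ → Set (List α)
  | 0 => {[]}
  | n + 1 => lshuffle (shufflePow L n) L

/-- Iterated shuffle `L^{⧢,*}`. -/
def shuffleStar (L : Set (List α)) : Set (List α) := ⋃ n, shufflePow L n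

/-- The set of permutations of a word. -/
def permW (w : List α) : Set (List α) := {v | v.Perm w}

/-- Permutation closure of a language. -/
def permL (L : Set (List α)) : Set (List α) := {v | ∃ w ∈ L, v.Perm w}

/-- Concatenation of languages. -/
def catL (L₁ L₂ : Set (List α)) : Set (List α) := {w | ∃ u ∈ L₁, ∃ v ∈ L₂, w = u ++ v}

/-- n-fold concatenation power. -/
def catPow (L : Set (List α)) : ℕ → Set (List α)
  | 0 => {[]}
  | n + 1 => catL (catPow L n) L

/-- Kleene star. -/
def kstar (L : Set (List α)) : Set (List α) := ⋃ n, catPow L n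

/-- Parikh mapping: counts occurrences of each letter. -/
def parikh [DecidableEq α] (w : List α) : α → ℕ := fun a => w.count a

-- word-level lemmas
lemma IsShuffle.comm {u v w : List α} (h : IsShuffle u v w) : IsShuffle v u w := by
  induction h with
  | nil => exact .nil
  | left a _ ih => exact .right a ih
  | right b _ ih => exact .left b ih

lemma isShuffle_nil_left (v : List α) : IsShuffle [] v v := by
  induction v with
  | nil => exact .nil
  | cons b t ih => exact .right b ih

lemma isShuffle_nil_right (u : List α) : IsShuffle u [] u :=
  (isShuffle_nil_left u).comm

lemma IsShuffle.eq_of_nil_left {v w : List α} (h : IsShuffle [] v w) : w = v := by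
  generalize hu : ([] : List α) = u at h
  induction h with
  | nil => rfl
  | left a _ ih => simp at hu
  | right b _ ih => simp_all

lemma IsShuffle.assoc {u v x t w : List α} (h₁ : IsShuffle u v x)
    (h₂ : IsShuffle x t w) : ∃ y, IsShuffle v t y ∧ IsShuffle u y w := by
  induction h₂ generalizing u v with
  | nil =>
    cases h₁
    exact ⟨[], .nil, .nil⟩
  | left a h ih =>
    cases h₁ with
    | left _ h' =>
      obtain ⟨y, hy1, hy2⟩ := ih h'
      exact ⟨y, hy1, .left a hy2⟩
    | right _ h' =>
      obtain ⟨y, hy1, hy2⟩ := ih h'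
      exact ⟨a :: y, .left a hy1, .right a hy2⟩
  | right b h ih =>
    obtain ⟨y, hy1, hy2⟩ := ih h₁
    exact ⟨b :: y, .right b hy1, .right b hy2⟩

-- set-level lemmas
lemma lshuffle_comm (A B : Set (List α)) : lshuffle A B = lshuffle B A := by
  ext w
  constructor <;> rintro ⟨u, hu, v, hv, h⟩ <;> exact ⟨v, hv, u, hu, h.comm⟩

lemma lshuffle_assoc (A B C : Set (List α)) :
    lshuffle (lshuffle A B) C = lshuffle A (lshuffle B C) := by
  ext w
  constructor
  · rintro ⟨x, ⟨u, hu, v, hv, h₁⟩, t, ht, h₂⟩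
    obtain ⟨y, hy1, hy2⟩ := h₁.assoc h₂
    exact ⟨u, hu, y, ⟨v, hv, t, ht, hy1⟩, hy2⟩
  · rintro ⟨u, hu, y, ⟨v, hv, t, ht, hy1⟩, hy2⟩
    obtain ⟨x, hx1, hx2⟩ := (hy1.comm.assoc hy2.comm)
    exact ⟨x, ⟨u, hu, v, hv, hx1.comm⟩, t, ht, hx2.comm⟩

lemma lshuffle_nil_right (A : Set (List α)) : lshuffle A {[]} = A := by
  ext w
  constructor
  · rintro ⟨u, hu, v, rfl, h⟩
    rwa [h.comm.eq_of_nil_left]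
  · intro hw
    exact ⟨w, hw, [], rfl, isShuffle_nil_right w⟩

lemma lshuffle_nil_left (A : Set (List α)) : lshuffle {[]} A = A := by
  rw [lshuffle_comm, lshuffle_nil_right]

lemma lshuffle_mono {A A' B B' : Set (List α)} (hA : A ⊆ A') (hB : B ⊆ B') :
    lshuffle A B ⊆ lshuffle A' B' := by
  rintro w ⟨u, hu, v, hv, h⟩
  exact ⟨u, hA hu, v, hB hv, h⟩

lemma lshuffle_union_right (A B C : Set (List α)) :
    lshuffle A (B ∪ C) = lshuffle A B ∪ lshuffle A C := by
  ext w
  constructor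
  · rintro ⟨u, hu, v, hv | hv, h⟩
    · exact Or.inl ⟨u, hu, v, hv, h⟩
    · exact Or.inr ⟨u, hu, v, hv, h⟩
  · rintro (⟨u, hu, v, hv, h⟩ | ⟨u, hu, v, hv, h⟩)
    · exact ⟨u, hu, v, Or.inl hv, h⟩
    · exact ⟨u, hu, v, Or.inr hv, h⟩

lemma lshuffle_iUnion_right (A : Set (List α)) (f : ℕ → Set (List α)) :
    lshuffle A (⋃ n, f n) = ⋃ n, lshuffle A (f n) := by
  ext w
  constructor
  · rintro ⟨u, hu, v, hv, h⟩
    obtain ⟨n, hn⟩ := Set.mem_iUnion.mp hv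
    exact Set.mem_iUnion.mpr ⟨n, u, hu, v, hn, h⟩
  · intro hw
    obtain ⟨n, u, hu, v, hv, h⟩ := Set.mem_iUnion.mp hw
    exact ⟨u, hu, v, Set.mem_iUnion.mpr ⟨n, hv⟩, h⟩

lemma lshuffle_union_left (A B C : Set (List α)) :
    lshuffle (A ∪ B) C = lshuffle A C ∪ lshuffle B C := by
  rw [lshuffle_comm, lshuffle_union_right, lshuffle_comm C A, lshuffle_comm C B]

lemma shufflePow_mono {A B : Set (List α)} (h : A ⊆ B) (n : ℕ) :
    shufflePow A n ⊆ shufflePow B n := by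
  induction n with
  | zero => exact subset_rfl
  | succ n ih => exact lshuffle_mono ih h

lemma subset_shuffleStar (A : Set (List α)) : A ⊆ shuffleStar A := by
  intro w hw
  exact Set.mem_iUnion.mpr ⟨1, by
    show w ∈ lshuffle (shufflePow A 0) A
    rw [show shufflePow A 0 = ({[]} : Set (List α)) from rfl, lshuffle_nil_left]
    exact hw⟩

lemma shuffleStar_mono {A B : Set (List α)} (h : A ⊆ B) :
    shuffleStar A ⊆ shuffleStar B := by
  intro w hw
  obtain ⟨n, hn⟩ := Set.mem_iUnion.mp hw
  exact Set.mem_iUnion.mpr ⟨n, shufflePow_mono h n hn⟩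

lemma nil_mem_shuffleStar (A : Set (List α)) : [] ∈ shuffleStar A :=
  Set.mem_iUnion.mpr ⟨0, rfl⟩

lemma lshuffle_pow_pow (A : Set (List α)) (m n : ℕ) :
    lshuffle (shufflePow A m) (shufflePow A n) ⊆ shufflePow A (m + n) := by
  induction n with
  | zero =>
    rw [show shufflePow A 0 = ({[]} : Set (List α)) from rfl, lshuffle_nil_right]
    exact subset_rfl
  | succ n ih =>
    show lshuffle _ (lshuffle _ _) ⊆ _
    rw [← lshuffle_assoc]
    exact lshuffle_mono ih subset_rfl

lemma lshuffle_star_star (A : Set (List α)) :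
    lshuffle (shuffleStar A) (shuffleStar A) ⊆ shuffleStar A := by
  unfold shuffleStar
  rw [lshuffle_iUnion_right]
  refine Set.iUnion_subset fun n => ?_
  rw [lshuffle_comm, lshuffle_iUnion_right]
  refine Set.iUnion_subset fun m => ?_
  rw [lshuffle_comm]
  exact (lshuffle_pow_pow A m n).trans (Set.subset_iUnion _ (m + n))

lemma lshuffle_star_self (A : Set (List α)) :
    lshuffle (shuffleStar A) A ⊆ shuffleStar A :=
  (lshuffle_mono subset_rfl (subset_shuffleStar A)).trans (lshuffle_star_star A)

theorem stmt6 (M₁ M₂ : Set (List α)) :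
    shuffleStar (lshuffle M₁ (shuffleStar M₂)) =
      lshuffle M₁ (shuffleStar (M₁ ∪ M₂)) ∪ {[]} := by
  set X := lshuffle M₁ (shuffleStar M₂) with hX
  set S := shuffleStar (M₁ ∪ M₂) with hS
  apply subset_antisymm
  · -- forward
    refine Set.iUnion_subset fun n => ?_
    induction n with
    | zero => exact fun w hw => Or.inr hw
    | succ n ih =>
      rintro w ⟨x, hx, y, hy, hxy⟩
      obtain ⟨a, ha, t, ht, hat⟩ := hy
      rcases ih hx with hx' | hx'
      · -- x ∈ M₁ ⧢ S
        obtain ⟨a', ha', s, hs, has⟩ := hx'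
        obtain ⟨z, hz1, hz2⟩ := has.assoc hxy
        refine Or.inl ⟨a', ha', z, ?_, hz2⟩
        -- z is shuffle of s and y; y is shuffle of a and t
        have hyS : y ∈ S := by
          refine lshuffle_star_star (M₁ ∪ M₂) ⟨a, subset_shuffleStar _ (Or.inl ha), t,
            shuffleStar_mono (Set.subset_union_right) ht, hat⟩
        exact lshuffle_star_star (M₁ ∪ M₂) ⟨s, hs, y, hyS, hz1⟩
      · -- x = []
        have hx0 : x = [] := hx'
        subst hx0
        have : w = y := hxy.eq_of_nil_left
        subst this
        exact Or.inl ⟨a, ha, t, shuffleStar_mono (Set.subset_union_right) ht, hat⟩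
  · -- backward
    have hM₁X : M₁ ⊆ X := by
      intro u hu
      exact ⟨u, hu, [], nil_mem_shuffleStar M₂, isShuffle_nil_right u⟩
    have key : ∀ n, lshuffle X (shufflePow (M₁ ∪ M₂) n) ⊆ shuffleStar X := by
      intro n
      induction n with
      | zero =>
        rw [show shufflePow (M₁ ∪ M₂) 0 = ({[]} : Set (List α)) from rfl,
          lshuffle_nil_right]
        exact subset_shuffleStar X
      | succ n ih =>
        show lshuffle X (lshuffle _ (M₁ ∪ M₂)) ⊆ _
        rw [lshuffle_comm (shufflePow (M₁ ∪ M₂) n) (M₁ ∪ M₂), ← lshuffle_assoc,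
          lshuffle_union_right, lshuffle_union_left]
        apply Set.union_subset
        · rw [lshuffle_comm X M₁, lshuffle_assoc]
          refine (lshuffle_mono subset_rfl ih).trans ?_
          rw [lshuffle_comm]
          exact (lshuffle_mono subset_rfl hM₁X).trans (lshuffle_star_self X)
        · refine subset_trans (lshuffle_mono ?_ subset_rfl) ih
          rw [hX, lshuffle_assoc]
          exact lshuffle_mono subset_rfl (lshuffle_star_self M₂)
    apply Set.union_subset
    · rw [hS]
      unfold shuffleStar
      rw [lshuffle_iUnion_right]
      refine Set.iUnion_subset fun n => ?_
      exact (lshuffle_mono hM₁X subset_rfl).trans (key n)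
    · intro w hw
      cases hw
      exact nil_mem_shuffleStar X
end

section
/- For every language L ⊆ Σ*: (perm(L))^{⧢,*} = perm(L^{⧢,*}) = perm(L*), where L* is the Kleene star and L^{⧢,*} the iterated shuffle. -/
variable {α : Type*}

lemma IsShuffle.perm_append {u v w : List α} (h : IsShuffle u v w) : w.Perm (u ++ v) := by
  induction h with
  | nil => rfl
  | left a _ ih => exact ih.cons a
  | right b _ ih => exact ((ih.cons b).trans List.perm_middle.symm)

lemma isShuffle_append : ∀ u v : List α, IsShuffle u v (u ++ v)
  | [], v => by
      induction v with
      | nil => exact .nil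
      | cons b v ih => exact .right b ih
  | a :: u, v => .left a (isShuffle_append u v)

lemma shuffle_of_perm_append : ∀ {w u v : List α}, w.Perm (u ++ v) →
    ∃ u' v', u'.Perm u ∧ v'.Perm v ∧ IsShuffle u' v' w := by
  classical
  intro w
  induction w with
  | nil =>
    intro u v h
    obtain ⟨hu, hv⟩ := List.append_eq_nil_iff.mp h.symm.eq_nil
    exact ⟨[], [], by simp [hu], by simp [hv], .nil⟩
  | cons a w ih =>
    intro u v h
    have ha : a ∈ u ++ v := h.subset (by simp)
    by_cases hau : a ∈ u
    · have hw : w.Perm (u.erase a ++ v) := by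
        have := h.erase a
        rwa [List.erase_cons_head, List.erase_append_left _ hau] at this
      obtain ⟨u'', v', hu, hv, hs⟩ := ih hw
      exact ⟨a :: u'', v', (hu.cons a).trans (List.perm_cons_erase hau).symm, hv, .left a hs⟩
    · have hav : a ∈ v := by
        rcases List.mem_append.mp ha with h' | h'
        · exact absurd h' hau
        · exact h'
      have hw : w.Perm (u ++ v.erase a) := by
        have := h.erase a
        rwa [List.erase_cons_head, List.erase_append_right _ hau] at this
      obtain ⟨u', v'', hu, hv, hs⟩ := ih hw
      exact ⟨u', a :: v'', hu, (hv.cons a).trans (List.perm_cons_erase hav).symm, .right a hs⟩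

lemma shufflePow_permL_subset (L : Set (List α)) :
    ∀ n, shufflePow (permL L) n ⊆ permL (shufflePow L n)
  | 0 => by intro w hw; exact ⟨w, hw, List.Perm.refl w⟩
  | n + 1 => by
    rintro w ⟨u, hu, v, ⟨v₀, hv₀, hvp⟩, hs⟩
    obtain ⟨u₀, hu₀, hup⟩ := shufflePow_permL_subset L n hu
    refine ⟨u₀ ++ v₀, ⟨u₀, hu₀, v₀, hv₀, isShuffle_append u₀ v₀⟩, ?_⟩
    exact hs.perm_append.trans (hup.append hvp)

lemma permL_shufflePow_subset (L : Set (List α)) :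
    ∀ n, permL (shufflePow L n) ⊆ shufflePow (permL L) n
  | 0 => by rintro w ⟨x, hx, hp⟩; simp only [shufflePow, Set.mem_singleton_iff] at hx ⊢
            subst hx; exact hp.eq_nil ▸ rfl
  | n + 1 => by
    rintro w ⟨x, ⟨u, hu, v, hv, hs⟩, hp⟩
    obtain ⟨u', v', hu', hv', hs'⟩ := shuffle_of_perm_append (hp.trans hs.perm_append)
    exact ⟨u', permL_shufflePow_subset L n ⟨u, hu, hu'⟩, v', ⟨v, hv, hv'⟩, hs'⟩

lemma shufflePow_subset_permL_catPow (L : Set (List α)) :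
    ∀ n, shufflePow L n ⊆ permL (catPow L n)
  | 0 => by intro w hw; exact ⟨w, hw, List.Perm.refl w⟩
  | n + 1 => by
    rintro w ⟨u, hu, v, hv, hs⟩
    obtain ⟨u₀, hu₀, hup⟩ := shufflePow_subset_permL_catPow L n hu
    exact ⟨u₀ ++ v, ⟨u₀, hu₀, v, hv, rfl⟩, hs.perm_append.trans (hup.append (List.Perm.refl v))⟩

lemma catPow_subset_permL_shufflePow (L : Set (List α)) :
    ∀ n, catPow L n ⊆ permL (shufflePow L n)
  | 0 => by intro w hw; exact ⟨w, hw, List.Perm.refl w⟩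
  | n + 1 => by
    rintro w ⟨u, hu, v, hv, rfl⟩
    obtain ⟨u₀, hu₀, hup⟩ := catPow_subset_permL_shufflePow L n hu
    exact ⟨u₀ ++ v, ⟨u₀, hu₀, v, hv, isShuffle_append u₀ v⟩, hup.append (List.Perm.refl v)⟩

theorem stmt14 (L : Set (List α)) :
    shuffleStar (permL L) = permL (shuffleStar L) ∧
    permL (shuffleStar L) = permL (kstar L) := by
  constructor
  · ext w
    constructor
    · rintro ⟨_, ⟨n, rfl⟩, hw⟩
      obtain ⟨x, hx, hp⟩ := shufflePow_permL_subset L n hw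
      exact ⟨x, Set.mem_iUnion.mpr ⟨n, hx⟩, hp⟩
    · rintro ⟨x, hx, hp⟩
      obtain ⟨_, ⟨n, rfl⟩, hx⟩ := hx
      exact Set.mem_iUnion.mpr ⟨n, permL_shufflePow_subset L n ⟨x, hx, hp⟩⟩
  · ext w
    constructor
    · rintro ⟨x, hx, hp⟩
      obtain ⟨_, ⟨n, rfl⟩, hx⟩ := hx
      obtain ⟨y, hy, hq⟩ := shufflePow_subset_permL_catPow L n hx
      exact ⟨y, Set.mem_iUnion.mpr ⟨n, hy⟩, hp.trans hq⟩
    · rintro ⟨x, hx, hp⟩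
      obtain ⟨_, ⟨n, rfl⟩, hx⟩ := hx
      obtain ⟨y, hy, hq⟩ := catPow_subset_permL_shufflePow L n hx
      exact ⟨y, Set.mem_iUnion.mpr ⟨n, hy⟩, hp.trans hq⟩
end
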